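/- Let n ≥ 1, let v₀, …, v_n be n+1 affinely independent points of ℝⁿ, and let S = convexHull{v₀, …, v_n} be the n-simplex they span. Then for every affine map u : ℝⁿ → ℝ, the Lebesgue integral of u over S equals the volume of S times the arithmetic mean of its vertex values: ∫_S u dx = vol(S) · (1/(n+1)) · ∑_{i=0}^{n} u(vᵢ). In particular, taking u to be a linear shape function N_I of the simplex (the affine map equal to 1 at vertex v_I and 0 at the other vertices), one obtains ∫_S N_I dx = vol(S)/(n+1), which is the identity underlying the FCFV source-term vector (f_e)_I = s_e |Ω_e| / n_en for a cell-wise constant source s_e. -/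

import Mathlib

/-!
Write `u = ∑ᵢ u(vᵢ) λᵢ` in the barycentric coordinates `λᵢ` of the simplex `S`. For any two
vertices there is an affine automorphism swapping them and fixing the others; it maps `S` onto
itself, so by the change of variables formula its Jacobian has absolute value `1` and it preserves
integrals over `S`. Hence all `∫_S λᵢ` coincide, and as `∑ᵢ λᵢ = 1` each of them is
`vol(S) / (n + 1)`.
-/

open MeasureTheory Set

namespace AffineBasis

variable {ι k V P : Type*} [Fintype ι] [Ring k] [AddCommGroup V] [Module k V] [AddTorsor V P]

theorem affineMap_apply_eq_sum_coord_smul {W : Type*} [AddCommGroup W] [Module k W]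
    (b : AffineBasis ι k P) (u : P →ᵃ[k] W) (x : P) :
    u x = ∑ i, b.coord i x • u (b i) := by
  conv_lhs => rw [← b.affineCombination_coord_eq_self x]
  rw [Finset.map_affineCombination _ _ _ (b.sum_coord_apply_eq_one x),
    Finset.affineCombination_eq_linear_combination _ _ _ (b.sum_coord_apply_eq_one x)]
  rfl

noncomputable def affineMapTo (b b' : AffineBasis ι k P) : P →ᵃ[k] P :=
  (Finset.univ.affineCombination k b').comp b.coords

variable (b b' : AffineBasis ι k P)

@[simp]
theorem coord_affineMapTo_apply (i : ι) (x : P) :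
    b'.coord i (b.affineMapTo b' x) = b.coord i x :=
  b'.coord_apply_combination_of_mem (Finset.mem_univ i) (b.sum_coord_apply_eq_one x)

@[simp]
theorem affineMapTo_apply_self (i : ι) : b.affineMapTo b' (b i) = b' i := by
  classical
  exact b'.ext_elem fun j => by rw [coord_affineMapTo_apply, coord_apply, coord_apply]

theorem affineMapTo_injective : Function.Injective (b.affineMapTo b') := fun x y h =>
  b.ext_elem fun i => by rw [← coord_affineMapTo_apply b b', h, coord_affineMapTo_apply]

end AffineBasis

section AffineChangeOfVariables

variable {E F : Type*} [NormedAddCommGroup E] [NormedSpace ℝ E] [FiniteDimensional ℝ E]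
  [MeasurableSpace E] [BorelSpace E] (μ : Measure E) [μ.IsAddHaarMeasure]
  [NormedAddCommGroup F] [NormedSpace ℝ F] {T : E →ᵃ[ℝ] E} {s : Set E}

theorem setIntegral_image_affineMap (hs : MeasurableSet s) (hT : InjOn T s) (f : E → F) :
    ∫ x in T '' s, f x ∂μ = |LinearMap.det T.linear| • ∫ x in s, f (T x) ∂μ := by
  let Tc : E →ᴬ[ℝ] E := ⟨T, T.continuous_of_finiteDimensional⟩
  have h := integral_image_eq_integral_abs_det_fderiv_smul μ hs
    (fun x _ => Tc.hasFDerivWithinAt) hT f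
  rwa [integral_smul] at h

theorem abs_det_linear_eq_one_of_image_eq (hs : MeasurableSet s) (hT : InjOn T s)
    (hTs : T '' s = s) (h₀ : μ s ≠ 0) (h_top : μ s ≠ ⊤) :
    |LinearMap.det T.linear| = 1 := by
  have h := setIntegral_image_affineMap μ hs hT fun _ => (1 : ℝ)
  rw [hTs, setIntegral_const, smul_eq_mul, mul_one, smul_eq_mul] at h
  exact (mul_eq_right₀ ((measureReal_ne_zero_iff h_top).2 h₀)).1 h.symm

theorem setIntegral_comp_affineMap_of_image_eq (hs : MeasurableSet s) (hT : InjOn T s)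
    (hTs : T '' s = s) (h₀ : μ s ≠ 0) (h_top : μ s ≠ ⊤) (f : E → F) :
    ∫ x in s, f (T x) ∂μ = ∫ x in s, f x ∂μ := by
  conv_rhs => rw [← hTs, setIntegral_image_affineMap μ hs hT,
    abs_det_linear_eq_one_of_image_eq μ hs hT hTs h₀ h_top, one_smul]

end AffineChangeOfVariables

namespace AffineBasis

variable {ι E : Type*} [NormedAddCommGroup E] [NormedSpace ℝ E] (b : AffineBasis ι ℝ E)

theorem image_affineMapTo_convexHull [Fintype ι] (b' : AffineBasis ι ℝ E) :
    b.affineMapTo b' '' convexHull ℝ (range b) = convexHull ℝ (range b') := by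
  rw [AffineMap.image_convexHull, ← range_comp]
  congr
  exact funext (b.affineMapTo_apply_self b')

theorem isCompact_convexHull [Finite ι] : IsCompact (convexHull ℝ (range b)) :=
  (finite_range b).isCompact_convexHull (𝕜 := ℝ)

variable [FiniteDimensional ℝ E] [MeasurableSpace E] (μ : Measure E) [μ.IsAddHaarMeasure]

theorem measure_convexHull_ne_zero : μ (convexHull ℝ (range b)) ≠ 0 :=
  (Measure.measure_pos_of_nonempty_interior _
    (interior_convexHull_nonempty_iff_affineSpan_eq_top.2 b.tot)).ne'

variable [Fintype ι] [BorelSpace E]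

theorem setIntegral_convexHull_coord_eq (i j : ι) :
    ∫ x in convexHull ℝ (range b), b.coord i x ∂μ =
      ∫ x in convexHull ℝ (range b), b.coord j x ∂μ := by
  classical
  set b' := b.reindex (Equiv.swap i j)
  have hcoord (x : E) : b.coord j (b.affineMapTo b' x) = b.coord i x := by
    rw [← coord_affineMapTo_apply b b' i x, coord_reindex, Equiv.symm_swap, Equiv.swap_apply_left]
  have himage : b.affineMapTo b' '' convexHull ℝ (range b) = convexHull ℝ (range b) := by
    rw [image_affineMapTo_convexHull, coe_reindex, EquivLike.range_comp]
  simp_rw [← hcoord]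
  exact setIntegral_comp_affineMap_of_image_eq μ b.isCompact_convexHull.measurableSet
    (b.affineMapTo_injective b').injOn himage (b.measure_convexHull_ne_zero μ)
    b.isCompact_convexHull.measure_lt_top.ne _

theorem setIntegral_convexHull_coord (i : ι) :
    ∫ x in convexHull ℝ (range b), b.coord i x ∂μ =
      μ.real (convexHull ℝ (range b)) / Fintype.card ι := by
  have hint (j : ι) : IntegrableOn (b.coord j) (convexHull ℝ (range b)) μ :=
    (b.coord j).continuous_of_finiteDimensional.continuousOn.integrableOn_compact
      b.isCompact_convexHull
  have hsum : ∑ j, ∫ x in convexHull ℝ (range b), b.coord j x ∂μ =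
      μ.real (convexHull ℝ (range b)) := by
    rw [← integral_finsetSum _ fun j _ => hint j]
    simp_rw [sum_coord_apply_eq_one, setIntegral_const, smul_eq_mul, mul_one]
  have : Nonempty ι := b.nonempty
  rw [← hsum, Finset.sum_congr rfl fun j _ => b.setIntegral_convexHull_coord_eq μ j i,
    Finset.sum_const, Finset.card_univ, nsmul_eq_mul, mul_div_cancel_left₀ _ (by positivity)]

theorem setIntegral_convexHull_affineMap {F : Type*} [NormedAddCommGroup F] [NormedSpace ℝ F]
    [CompleteSpace F] (u : E →ᵃ[ℝ] F) :
    ∫ x in convexHull ℝ (range b), u x ∂μ =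
      (μ.real (convexHull ℝ (range b)) / Fintype.card ι) • ∑ i, u (b i) := by
  have hint (i : ι) :
      IntegrableOn (fun x => b.coord i x • u (b i)) (convexHull ℝ (range b)) μ :=
    ((b.coord i).continuous_of_finiteDimensional.smul continuous_const).continuousOn
      |>.integrableOn_compact b.isCompact_convexHull
  conv_lhs => rw [funext (b.affineMap_apply_eq_sum_coord_smul u)]
  rw [integral_finsetSum _ fun i _ => hint i]
  simp_rw [integral_smul_const, setIntegral_convexHull_coord, Finset.smul_sum]

end AffineBasis

theorem integral_affineMap_fullSimplex_eq_volume_mul_mean_general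
    (n : ℕ)
    (v : Fin (n + 1) → EuclideanSpace ℝ (Fin n))
    (hv : AffineIndependent ℝ v)
    (u : EuclideanSpace ℝ (Fin n) →ᵃ[ℝ] ℝ) :
    ∫ x in convexHull ℝ (Set.range v), u x =
      (volume (convexHull ℝ (Set.range v))).toReal *
        ((1 / (n + 1 : ℝ)) * ∑ i, u (v i)) := by
  have hspan : affineSpan ℝ (range v) = ⊤ := by
    rw [hv.affineSpan_eq_top_iff_card_eq_finrank_add_one]
    simp
  let b : AffineBasis (Fin (n + 1)) ℝ (EuclideanSpace ℝ (Fin n)) := ⟨v, hv, hspan⟩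
  rw [show v = b from rfl, b.setIntegral_convexHull_affineMap volume, smul_eq_mul,
    measureReal_def, Fintype.card_fin]
  push_cast
  ring

/-- The Lebesgue integral of an affine map over a nondegenerate `n`-simplex of
`ℝⁿ` equals the volume of the simplex times the arithmetic mean of its vertex
values. -/
theorem integral_affineMap_fullSimplex_eq_volume_mul_mean
    (n : ℕ) (hn : 1 ≤ n)
    (v : Fin (n + 1) → EuclideanSpace ℝ (Fin n))
    (hv : AffineIndependent ℝ v)
    (u : EuclideanSpace ℝ (Fin n) →ᵃ[ℝ] ℝ) :
    ∫ x in convexHull ℝ (Set.range v), u x =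
      (volume (convexHull ℝ (Set.range v))).toReal *
        ((1 / (n + 1 : ℝ)) * ∑ i, u (v i)) :=
  integral_affineMap_fullSimplex_eq_volume_mul_mean_general n v hv u
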